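/- arXiv:1603.01234 — 2 statements merged into one kernel-verified Lean document; each statement's English description precedes it below -/
import Mathlib

section
/- Let γ ∈ (1,2) and let ρ₁, ρ₂ : ℝ → ℝ be continuous bounded functions that agree outside (0,1) and satisfy, for every H ∈ C_c^∞((0,1)), ∫_ℝ (ρ₁(q) − ρ₂(q)) ((-Δ)^{γ/2} H)(q) dq = 0, where ((-Δ)^{γ/2} H)(q) = c_γ P.V.∫ (H(q)−H(y))|y−q|^{-(1+γ)} dy. If moreover ρ₁ − ρ₂ is γ/2-harmonic in (0,1) (equal a.e. to a function that is γ/2-harmonic), then ρ₁ = ρ₂ everywhere. -/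
open MeasureTheory

/-- `HasFracLapAt c γ H q L` means the principal-value fractional Laplacian
`((-Δ)^{γ/2} H)(q) = c · P.V.∫ (H(q)-H(y)) |y-q|^{-(1+γ)} dy` exists and equals `L`. -/
def HasFracLapAt (c γ : ℝ) (H : ℝ → ℝ) (q L : ℝ) : Prop :=
  Filter.Tendsto
    (fun ε : ℝ => c * ∫ y in {y : ℝ | ε ≤ |y - q|}, (H q - H y) * |y - q| ^ (-(1 + γ)))
    (nhdsWithin 0 (Set.Ioi 0)) (nhds L)

/-- `u` is `γ/2`-harmonic in `(0,1)`: its fractional Laplacian vanishes there. -/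
def IsFracHarmonicOn (c γ : ℝ) (u : ℝ → ℝ) : Prop :=
  ∀ x ∈ Set.Ioo (0 : ℝ) 1, HasFracLapAt c γ u x 0

/-- The kernel `|y - q| ^ s` is integrable away from the singularity when `s < -1`. -/
lemma kernel_integrableOn {s : ℝ} (hs : s < -1) (q : ℝ) {ε : ℝ} (hε : 0 < ε) :
    IntegrableOn (fun y : ℝ => |y - q| ^ s) {y : ℝ | ε ≤ |y - q|} := by
  have base : IntegrableOn (fun z : ℝ => |z| ^ s) {z : ℝ | ε ≤ |z|} := by
    have hIoi : IntegrableOn (fun z : ℝ => |z| ^ s) (Set.Ici ε) := by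
      rw [integrableOn_Ici_iff_integrableOn_Ioi]
      refine ((integrableOn_Ioi_rpow_iff hε).mpr hs).congr_fun ?_ measurableSet_Ioi
      intro x hx
      show x ^ s = |x| ^ s
      rw [abs_of_pos (lt_trans hε hx)]
    have hIic : IntegrableOn (fun z : ℝ => |z| ^ s) (Set.Iic (-ε)) := by
      have key := (Measure.measurePreserving_neg (volume : Measure ℝ)).integrableOn_comp_preimage
          (Homeomorph.neg ℝ).measurableEmbedding
          (f := fun z : ℝ => |z| ^ s) (s := Set.Iic (-ε))
      have h1 : ((fun z : ℝ => |z| ^ s) ∘ (Neg.neg : ℝ → ℝ)) = fun z : ℝ => |z| ^ s := by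
        funext z; simp [Function.comp, abs_neg]
      have h2 : ((Neg.neg : ℝ → ℝ) ⁻¹' Set.Iic (-ε)) = Set.Ici ε := by
        ext z; simp only [Set.mem_preimage, Set.mem_Iic, Set.mem_Ici]
        constructor <;> intro h <;> linarith
      rw [h1, h2] at key
      exact key.mp hIoi
    have hsub : {z : ℝ | ε ≤ |z|} ⊆ Set.Iic (-ε) ∪ Set.Ici ε := by
      intro z hz
      simp only [Set.mem_setOf_eq] at hz
      rcases le_or_gt 0 z with h | h
      · right; rw [abs_of_nonneg h] at hz; exact hz
      · left; rw [abs_of_neg h] at hz; simp only [Set.mem_Iic]; linarith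
    exact (hIic.union hIoi).mono_set hsub
  have key := (measurePreserving_sub_right (volume : Measure ℝ) q).integrableOn_comp_preimage
      (MeasurableEquiv.subRight q).measurableEmbedding
      (f := fun z : ℝ => |z| ^ s) (s := {z : ℝ | ε ≤ |z|})
  exact key.mpr base

/-- Key maximum-principle step: a continuous bounded function vanishing outside `(0,1)`
whose fractional Laplacian vanishes in `(0,1)` is nonpositive. -/
lemma frac_harmonic_nonpos (γ c : ℝ) (hγ : γ ∈ Set.Ioo (1 : ℝ) 2) (hc : 0 < c)
    (v : ℝ → ℝ) (hvc : Continuous v) (hb : ∃ M, ∀ x, |v x| ≤ M)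
    (hv0 : ∀ x ∉ Set.Ioo (0 : ℝ) 1, v x = 0)
    (hharm : IsFracHarmonicOn c γ v) : ∀ x, v x ≤ 0 := by
  intro x
  by_contra hx
  push_neg at hx
  obtain ⟨M, hM⟩ := hb
  -- x is in (0,1)
  have hxI : x ∈ Set.Ioo (0 : ℝ) 1 := by
    by_contra h; rw [hv0 x h] at hx; exact lt_irrefl 0 hx
  -- maximum over [0,1]
  obtain ⟨x₀, hx₀I, hmax⟩ := isCompact_Icc.exists_isMaxOn (Set.nonempty_Icc.mpr zero_le_one)
    (hvc.continuousOn (s := Set.Icc (0:ℝ) 1))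
  have hvx₀ : 0 < v x₀ := lt_of_lt_of_le hx (hmax (Set.Ioo_subset_Icc_self hxI))
  have hglobal : ∀ y, v y ≤ v x₀ := by
    intro y
    by_cases hy : y ∈ Set.Icc (0:ℝ) 1
    · exact hmax hy
    · rw [hv0 y (fun h => hy (Set.Ioo_subset_Icc_self h))]; exact hvx₀.le
  have hx₀Ioo : x₀ ∈ Set.Ioo (0 : ℝ) 1 := by
    by_contra h; rw [hv0 x₀ h] at hvx₀; exact lt_irrefl 0 hvx₀
  set s : ℝ := -(1 + γ) with hsdef
  have hs : s < -1 := by simp only [hsdef]; linarith [hγ.1]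
  set g : ℝ → ℝ := fun y => (v x₀ - v y) * |y - x₀| ^ s with hgdef
  have hg_nonneg : ∀ y, 0 ≤ g y := fun y =>
    mul_nonneg (sub_nonneg.mpr (hglobal y)) (Real.rpow_nonneg (abs_nonneg _) _)
  have hg_meas : Measurable g := by
    have hm := hvc.measurable
    rw [hgdef]
    measurability
  -- g is integrable on each region {y | ε ≤ |y - x₀|}
  have hg_int : ∀ ε : ℝ, 0 < ε → IntegrableOn g {y : ℝ | ε ≤ |y - x₀|} := by
    intro ε hε
    refine Integrable.mono' (((kernel_integrableOn hs x₀ hε).const_mul (2 * M)))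
      hg_meas.aestronglyMeasurable ?_
    filter_upwards with y
    rw [Real.norm_eq_abs, hgdef]
    simp only
    rw [abs_mul, abs_of_nonneg (Real.rpow_nonneg (abs_nonneg _) _)]
    have h1 : |v x₀ - v y| ≤ 2 * M := by
      have := abs_sub_abs_le_abs_sub (v x₀) (v y)
      calc |v x₀ - v y| ≤ |v x₀| + |v y| := by
            simpa [sub_eq_add_neg, abs_neg] using abs_add_le (v x₀) (-(v y))
        _ ≤ M + M := add_le_add (hM _) (hM _)
        _ = 2 * M := by ring
    exact mul_le_mul_of_nonneg_right h1 (Real.rpow_nonneg (abs_nonneg _) _)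
  -- the positive lower bound
  set A : ℝ := c * (v x₀ * (3 : ℝ) ^ s) with hAdef
  have hApos : 0 < A :=
    mul_pos hc (mul_pos hvx₀ (Real.rpow_pos_of_pos (by norm_num) s))
  have hIcc_sub : ∀ ε : ℝ, ε ≤ 1 → Set.Icc (2:ℝ) 3 ⊆ {y : ℝ | ε ≤ |y - x₀|} := by
    intro ε hε y hy
    have : (1:ℝ) ≤ y - x₀ := by
      have := hy.1; have := hx₀Ioo.2; simp only [Set.mem_Icc] at hy; linarith
    simp only [Set.mem_setOf_eq]
    rw [abs_of_pos (by linarith)]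
    linarith
  have hbound : ∀ ε : ℝ, ε ∈ Set.Ioc (0:ℝ) 1 →
      A ≤ c * ∫ y in {y : ℝ | ε ≤ |y - x₀|}, (v x₀ - v y) * |y - x₀| ^ (-(1 + γ)) := by
    intro ε hε
    have hint := hg_int ε hε.1
    have hIcc := hIcc_sub ε hε.2
    have step1 : ∫ y in Set.Icc (2:ℝ) 3, g y ≤ ∫ y in {y : ℝ | ε ≤ |y - x₀|}, g y := by
      refine setIntegral_mono_set hint ?_ (HasSubset.Subset.eventuallyLE hIcc)
      filter_upwards with y using hg_nonneg y
    have step2 : v x₀ * (3:ℝ) ^ s ≤ ∫ y in Set.Icc (2:ℝ) 3, g y := by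
      have hconst : ∫ _ in Set.Icc (2:ℝ) 3, (v x₀ * (3:ℝ) ^ s) = v x₀ * (3:ℝ) ^ s := by
        rw [setIntegral_const, Real.volume_real_Icc]
        norm_num
      rw [← hconst]
      refine setIntegral_mono_on ((integrableOn_const_iff (C := v x₀ * (3:ℝ) ^ s) (by finiteness)).mpr ?_) (hint.mono_set hIcc)
        measurableSet_Icc ?_
      · right; rw [Real.volume_Icc]; exact ENNReal.ofReal_lt_top
      · intro y hy
        have hv_y : v y = 0 := hv0 y (by
          intro h; simp only [Set.mem_Icc] at hy; have := h.2; linarith)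
        have h1y : (1:ℝ) ≤ y - x₀ := by
          simp only [Set.mem_Icc] at hy; have := hx₀Ioo.2; linarith
        have h3y : |y - x₀| ≤ 3 := by
          rw [abs_of_pos (by linarith)]
          simp only [Set.mem_Icc] at hy; have := hx₀Ioo.1; linarith
        have hpow : (3:ℝ) ^ s ≤ |y - x₀| ^ s :=
          Real.rpow_le_rpow_of_nonpos (by rw [abs_of_pos (by linarith : (0:ℝ) < y - x₀)]; linarith)
            h3y ((hs.trans (by norm_num)).le)
        rw [hgdef]
        simp only [hv_y, sub_zero]
        exact mul_le_mul_of_nonneg_left hpow hvx₀.le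
    have : v x₀ * (3:ℝ) ^ s ≤ ∫ y in {y : ℝ | ε ≤ |y - x₀|}, g y := le_trans step2 step1
    calc A = c * (v x₀ * (3:ℝ) ^ s) := hAdef
      _ ≤ c * ∫ y in {y : ℝ | ε ≤ |y - x₀|}, g y := by
          exact mul_le_mul_of_nonneg_left this hc.le
      _ = c * ∫ y in {y : ℝ | ε ≤ |y - x₀|}, (v x₀ - v y) * |y - x₀| ^ (-(1 + γ)) := rfl
  have hlap := hharm x₀ hx₀Ioo
  have hev : ∀ᶠ ε in nhdsWithin (0:ℝ) (Set.Ioi 0),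
      A ≤ c * ∫ y in {y : ℝ | ε ≤ |y - x₀|}, (v x₀ - v y) * |y - x₀| ^ (-(1 + γ)) := by
    filter_upwards [Ioc_mem_nhdsGT_of_mem (Set.mem_Ico.mpr ⟨le_refl 0, zero_lt_one⟩)]
      with ε hε using hbound ε hε
  have : A ≤ 0 := ge_of_tendsto hlap hev
  linarith

theorem stmt_12 (γ c : ℝ) (hγ : γ ∈ Set.Ioo (1 : ℝ) 2) (hc : 0 < c)
    (ρ₁ ρ₂ : ℝ → ℝ) (hρ₁c : Continuous ρ₁) (hρ₂c : Continuous ρ₂)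
    (hρ₁b : ∃ M, ∀ x, |ρ₁ x| ≤ M) (hρ₂b : ∃ M, ∀ x, |ρ₂ x| ≤ M)
    (hagree : ∀ x, x ∉ Set.Ioo (0 : ℝ) 1 → ρ₁ x = ρ₂ x)
    (hweak : ∀ H : ℝ → ℝ, ContDiff ℝ (⊤ : ℕ∞) H → HasCompactSupport H →
      tsupport H ⊆ Set.Ioo (0 : ℝ) 1 →
      ∀ L : ℝ → ℝ, (∀ q, HasFracLapAt c γ H q (L q)) →
        ∫ q : ℝ, (ρ₁ q - ρ₂ q) * L q = 0)
    (hharm : ∃ u : ℝ → ℝ, Continuous u ∧ (∀ᵐ q : ℝ, u q = ρ₁ q - ρ₂ q) ∧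
      IsFracHarmonicOn c γ u) :
    ρ₁ = ρ₂ := by
  obtain ⟨u, huc, huae, huharm⟩ := hharm
  have huv : u = fun q => ρ₁ q - ρ₂ q :=
    (huc.ae_eq_iff_eq volume (hρ₁c.sub hρ₂c)).mp huae
  obtain ⟨M₁, hM₁⟩ := hρ₁b
  obtain ⟨M₂, hM₂⟩ := hρ₂b
  have hub : ∀ x, |u x| ≤ M₁ + M₂ := by
    intro x; rw [huv]
    exact le_trans (abs_sub _ _) (add_le_add (hM₁ x) (hM₂ x))
  have hu0 : ∀ x ∉ Set.Ioo (0 : ℝ) 1, u x = 0 := by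
    intro x hx; rw [huv]; simp [hagree x hx]
  have h1 : ∀ x, u x ≤ 0 :=
    frac_harmonic_nonpos γ c hγ hc u huc ⟨M₁ + M₂, hub⟩ hu0 huharm
  have hnegharm : IsFracHarmonicOn c γ (fun y => -u y) := by
    intro x hx
    have := (huharm x hx).neg
    rw [neg_zero] at this
    refine this.congr (fun ε => ?_)
    simp only
    rw [← mul_neg, ← integral_neg]
    congr 1
    refine integral_congr_ae (Filter.Eventually.of_forall fun y => ?_)
    ring
  have h2 : ∀ x, -u x ≤ 0 :=
    frac_harmonic_nonpos γ c hγ hc (fun y => -u y) huc.neg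
      ⟨M₁ + M₂, fun x => by rw [abs_neg]; exact hub x⟩
      (fun x hx => by simp [hu0 x hx]) hnegharm
  funext x
  have : u x = 0 := le_antisymm (h1 x) (by linarith [h2 x])
  rw [huv] at this
  simpa [sub_eq_zero] using this
end

section
/- Let γ ∈ (1,2), p(z) = c_γ|z|^{-(1+γ)} for z ≠ 0, p(0)=0, and for z ∈ {1,…,N−1} define φ_N(z/N) = −(z/N) N^γ ∑_{y≥z} p(y) + (1 − 1/N − z/N) N^γ ∑_{y ≥ N−z} p(y) + N^{γ−1}(∑_{y≥z} y p(y) − ∑_{y ≥ N−z} y p(y)). Then there is a constant C > 0, independent of N and z, such that |φ_N(z/N)| ≤ C((z/N)^{1−γ} + (1 − z/N)^{1−γ}). -/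
/-!
Every tail sum is bounded by a power of its lower limit:
`∑_{y ≥ w} y ^ (-(1 + s)) ≤ (2 ^ (1 + s) / s) * w ^ (-s)`, by telescoping against `w ^ (-s)`
(mean value theorem). With `a = z`, `b = N - z`, the two sums of `p` are then
`O(a ^ (-γ))` and `O(b ^ (-γ))` and, multiplied by `a / N * N ^ γ` and `(b - 1) / N * N ^ γ`,
give `O((a / N) ^ (1 - γ))` and `O((b / N) ^ (1 - γ))`; the first-moment sums are
`O(a ^ (1 - γ))` and `O(b ^ (1 - γ))`, and the factor `N ^ (γ - 1)` turns them into the same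
two terms. No cancellation between the terms is needed.
-/

open Finset

theorem tsum_ite_mem_Icc_of_le_sub_succ {f G : ℕ → ℝ} {z : ℕ} (hf₀ : ∀ y, z ≤ y → 0 ≤ f y)
    (hfG : ∀ y, z ≤ y → f y ≤ G y - G (y + 1)) (hG : ∀ y, z ≤ y → 0 ≤ G y) :
    ∑' y, (if z ≤ y then f y else 0) ∈ Set.Icc 0 (G z) := by
  have hterm (y : ℕ) : 0 ≤ if z ≤ y then f y else 0 := by
    split_ifs with h
    exacts [hf₀ y h, le_rfl]
  refine ⟨tsum_nonneg hterm, Real.tsum_le_of_sum_range_le hterm fun n => ?_⟩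
  rcases le_or_gt z n with hzn | hnz
  · have hIco : {y ∈ range n | z ≤ y} = Ico z n := by ext; simp [and_comm]
    calc ∑ y ∈ range n, (if z ≤ y then f y else 0) = ∑ y ∈ Ico z n, f y := by
          rw [← sum_filter, hIco]
      _ ≤ ∑ y ∈ Ico z n, (G y - G (y + 1)) := sum_le_sum fun y hy => hfG y (mem_Ico.1 hy).1
      _ = G z - G n := by
          rw [← neg_sub, ← sum_Ico_sub G hzn, ← sum_neg_distrib]
          simp_rw [neg_sub]
      _ ≤ G z := sub_le_self _ (hG n hzn)
  · rw [sum_eq_zero fun y hy => if_neg (by rw [mem_range] at hy; omega)]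
    exact hG z le_rfl

theorem rpow_neg_sub_rpow_neg_add_one_ge {s a : ℝ} (hs : 0 < s) (ha : 0 < a) :
    s * (a + 1) ^ (-(1 + s)) ≤ a ^ (-s) - (a + 1) ^ (-s) := by
  obtain ⟨ξ, ⟨haξ, hξa⟩, hslope⟩ := exists_hasDerivAt_eq_slope (fun x : ℝ => x ^ (-s))
    (fun x => -s * x ^ (-s - 1)) (lt_add_one a)
    (continuousOn_id.rpow_const fun x hx => Or.inl (ha.trans_le hx.1).ne')
    (fun x hx => Real.hasDerivAt_rpow_const (Or.inl (ha.trans hx.1).ne'))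
  rw [add_sub_cancel_left, div_one] at hslope
  have hmono : (a + 1) ^ (-(1 + s)) ≤ ξ ^ (-s - 1) := by
    rw [show -(1 + s) = -s - 1 by ring]
    exact Real.rpow_le_rpow_of_nonpos (ha.trans haξ) hξa.le (by linarith)
  calc s * (a + 1) ^ (-(1 + s)) ≤ s * ξ ^ (-s - 1) := mul_le_mul_of_nonneg_left hmono hs.le
    _ = a ^ (-s) - (a + 1) ^ (-s) := by linarith

theorem rpow_neg_one_add_le {s y : ℝ} (hs : 0 < s) (hy : 1 ≤ y) :
    y ^ (-(1 + s)) ≤ 2 ^ (1 + s) / s * (y ^ (-s) - (y + 1) ^ (-s)) := by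
  have hy0 : 0 < y := by linarith
  calc y ^ (-(1 + s)) ≤ ((y + 1) / 2) ^ (-(1 + s)) :=
        Real.rpow_le_rpow_of_nonpos (by positivity) (by linarith) (by linarith)
    _ = 2 ^ (1 + s) / s * (s * (y + 1) ^ (-(1 + s))) := by
        rw [Real.div_rpow (by positivity) zero_le_two, Real.rpow_neg zero_le_two]
        field_simp
    _ ≤ 2 ^ (1 + s) / s * (y ^ (-s) - (y + 1) ^ (-s)) :=
        mul_le_mul_of_nonneg_left (rpow_neg_sub_rpow_neg_add_one_ge hs hy0) (by positivity)

theorem tsum_ite_mem_Icc_of_eq_rpow {f : ℕ → ℝ} {c s : ℝ} {w : ℕ} (hc : 0 ≤ c) (hs : 0 < s)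
    (hw : 1 ≤ w) (hf : ∀ y, w ≤ y → f y = c * (y : ℝ) ^ (-(1 + s))) :
    ∑' y, (if w ≤ y then f y else 0) ∈ Set.Icc 0 (c * (2 ^ (1 + s) / s) * (w : ℝ) ^ (-s)) := by
  refine tsum_ite_mem_Icc_of_le_sub_succ (G := fun y => c * (2 ^ (1 + s) / s) * (y : ℝ) ^ (-s))
    (fun y hy => by rw [hf y hy]; positivity) (fun y hy => ?_) (fun y _ => by positivity)
  have hy1 : (1 : ℝ) ≤ y := by exact_mod_cast hw.trans hy
  rw [hf y hy, Nat.cast_succ, mul_assoc c, mul_assoc c, ← mul_sub, ← mul_sub]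
  exact mul_le_mul_of_nonneg_left (rpow_neg_one_add_le hs hy1) hc

theorem mul_rpow_mul_le {a n t k K S : ℝ} (ha : 0 < a) (hn : 0 < n) (hk : k ≤ a / n)
    (hS₀ : 0 ≤ S) (hS : S ≤ K * a ^ (-t)) : k * n ^ t * S ≤ K * (a / n) ^ (1 - t) :=
  calc k * n ^ t * S ≤ a / n * n ^ t * (K * a ^ (-t)) := by gcongr
    _ = K * (a / n) ^ (1 - t) := by
        rw [Real.rpow_sub (div_pos ha hn), Real.rpow_one, Real.div_rpow ha.le hn.le,
          Real.rpow_neg ha.le]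
        field_simp

theorem rpow_mul_le {a n t L U : ℝ} (ha : 0 < a) (hn : 0 < n) (hU : U ≤ L * a ^ (1 - t)) :
    n ^ (t - 1) * U ≤ L * (a / n) ^ (1 - t) := by
  rw [Real.div_rpow ha.le hn.le, div_eq_inv_mul, ← Real.rpow_neg hn.le, neg_sub, mul_left_comm]
  exact mul_le_mul_of_nonneg_left hU (by positivity)

theorem abs_phi_le {a b n t K L S₁ S₂ U₁ U₂ : ℝ} (ha : 0 < a) (hb : 1 ≤ b) (hab : a + b = n)
    (hS₁ : S₁ ∈ Set.Icc 0 (K * a ^ (-t))) (hS₂ : S₂ ∈ Set.Icc 0 (K * b ^ (-t)))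
    (hU₁ : U₁ ∈ Set.Icc 0 (L * a ^ (1 - t))) (hU₂ : U₂ ∈ Set.Icc 0 (L * b ^ (1 - t))) :
    |-(a / n) * n ^ t * S₁ + (1 - 1 / n - a / n) * n ^ t * S₂ + n ^ (t - 1) * (U₁ - U₂)|
      ≤ (K + L) * ((a / n) ^ (1 - t) + (1 - a / n) ^ (1 - t)) := by
  have hb₀ : 0 < b := by linarith
  have hn : 0 < n := by linarith
  have hb' : 1 - a / n = b / n := by field_simp; linarith
  have hcoef₀ : 0 ≤ 1 - 1 / n - a / n := by
    rw [sub_sub, ← add_div, sub_nonneg, div_le_one hn]; linarith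
  have hcoef : 1 - 1 / n - a / n ≤ b / n := by rw [← hb']; linarith [one_div_pos.2 hn]
  rw [hb']
  have h₁ := mul_rpow_mul_le ha hn le_rfl hS₁.1 hS₁.2
  have h₂ := mul_rpow_mul_le hb₀ hn hcoef hS₂.1 hS₂.2
  have h₃ := rpow_mul_le (t := t) ha hn hU₁.2
  have h₄ := rpow_mul_le (t := t) hb₀ hn hU₂.2
  have h₁₀ : 0 ≤ a / n * n ^ t * S₁ := mul_nonneg (by positivity) hS₁.1
  have h₂₀ : 0 ≤ (1 - 1 / n - a / n) * n ^ t * S₂ := mul_nonneg (by positivity) hS₂.1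
  have h₃₀ : 0 ≤ n ^ (t - 1) * U₁ := mul_nonneg (by positivity) hU₁.1
  have h₄₀ : 0 ≤ n ^ (t - 1) * U₂ := mul_nonneg (by positivity) hU₂.1
  rw [mul_sub, neg_mul, neg_mul, abs_le, add_mul, mul_add, mul_add]
  constructor <;> linarith

theorem stmt_19_general (γ c : ℝ) (hγ : γ ∈ Set.Ioo (1 : ℝ) 2) (hc : 0 < c)
    (p : ℤ → ℝ)
    (hp : ∀ z : ℤ, z ≠ 0 → p z = c * |(z : ℝ)| ^ (-(1 + γ))) :
    ∃ C > 0, ∀ N : ℕ, 2 ≤ N → ∀ z : ℕ, 1 ≤ z → z ≤ N - 1 →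
      |(-((z : ℝ) / N) * (N : ℝ) ^ γ * (∑' y : ℕ, if z ≤ y then p (y : ℤ) else 0)
          + (1 - 1 / (N : ℝ) - (z : ℝ) / N) * (N : ℝ) ^ γ *
              (∑' y : ℕ, if N - z ≤ y then p (y : ℤ) else 0)
          + (N : ℝ) ^ (γ - 1) *
              ((∑' y : ℕ, if z ≤ y then (y : ℝ) * p (y : ℤ) else 0)
                - ∑' y : ℕ, if N - z ≤ y then (y : ℝ) * p (y : ℤ) else 0))|
        ≤ C * (((z : ℝ) / N) ^ (1 - γ) + (1 - (z : ℝ) / N) ^ (1 - γ)) := by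
  obtain ⟨hγ₁, -⟩ := hγ
  have hp_nat : ∀ y : ℕ, 1 ≤ y → p y = c * (y : ℝ) ^ (-(1 + γ)) := fun y hy => by
    rw [hp y (by exact_mod_cast (Nat.one_le_iff_ne_zero.1 hy)), Int.cast_natCast, Nat.abs_cast]
  have hyp_nat : ∀ y : ℕ, 1 ≤ y → y * p y = c * (y : ℝ) ^ (-(1 + (γ - 1))) := fun y hy => by
    rw [hp_nat y hy, mul_left_comm, ← Real.rpow_one_add' (Nat.cast_nonneg y) (by linarith)]
    ring_nf
  have hS (w : ℕ) (hw : 1 ≤ w) := tsum_ite_mem_Icc_of_eq_rpow hc.le (by linarith) hw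
    fun y hy => hp_nat y (hw.trans hy)
  have hU (w : ℕ) (hw : 1 ≤ w) := neg_sub γ 1 ▸
    tsum_ite_mem_Icc_of_eq_rpow hc.le (by linarith) hw fun y hy => hyp_nat y (hw.trans hy)
  refine ⟨c * (2 ^ (1 + γ) / γ) + c * (2 ^ (1 + (γ - 1)) / (γ - 1)), by positivity,
    fun N _ z hz hzN => ?_⟩
  have hw : 1 ≤ N - z := by omega
  have hzw : (z : ℝ) + ((N - z : ℕ) : ℝ) = N := by rw [Nat.cast_sub (by omega)]; ring
  exact abs_phi_le (by positivity) (by exact_mod_cast hw) hzw (hS z hz) (hS _ hw) (hU z hz)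
    (hU _ hw)

theorem stmt_19 (γ c : ℝ) (hγ : γ ∈ Set.Ioo (1 : ℝ) 2) (hc : 0 < c)
    (p : ℤ → ℝ) (hp0 : p 0 = 0)
    (hp : ∀ z : ℤ, z ≠ 0 → p z = c * |(z : ℝ)| ^ (-(1 + γ))) :
    ∃ C > 0, ∀ N : ℕ, 2 ≤ N → ∀ z : ℕ, 1 ≤ z → z ≤ N - 1 →
      |(-((z : ℝ) / N) * (N : ℝ) ^ γ * (∑' y : ℕ, if z ≤ y then p (y : ℤ) else 0)
          + (1 - 1 / (N : ℝ) - (z : ℝ) / N) * (N : ℝ) ^ γ *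
              (∑' y : ℕ, if N - z ≤ y then p (y : ℤ) else 0)
          + (N : ℝ) ^ (γ - 1) *
              ((∑' y : ℕ, if z ≤ y then (y : ℝ) * p (y : ℤ) else 0)
                - ∑' y : ℕ, if N - z ≤ y then (y : ℝ) * p (y : ℤ) else 0))|
        ≤ C * (((z : ℝ) / N) ^ (1 - γ) + (1 - (z : ℝ) / N) ^ (1 - γ)) :=
  stmt_19_general γ c hγ hc p hp
end
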